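/- Let (X, 𝒜, μ) be a probability space, 0 < γ < 1/2, and let g₁,…,g_J : [γ,1-γ] × X → [0,1] be jointly measurable functions such that for each x ∈ X and each j, the map t ↦ gⱼ(t,x) is convex and 1-Lipschitz. For λ ∈ [0,∞)^J and x ∈ X, let p(x,λ) be the unique minimizer over t ∈ [γ,1-γ] of f(t) + Σⱼ λⱼ gⱼ(t,x), where f(t) = 1/t + 1/(1-t). Then for each j, the function h_j(λ) = ∫ gⱼ(p(x,λ), x) dμ(x) is (1/32)-Lipschitz on [0,∞)^J with respect to the ℓ¹ norm, i.e., |h_j(λ) - h_j(λ')| ≤ (1/32)·‖λ - λ'‖₁ for all λ, λ' ∈ [0,∞)^J. -/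

import Mathlib

/-!
The variance surrogate `f(t) = 1/t + 1/(1-t)` has `f'' = 2/t³ + 2/(1-t)³ ≥ 32` on `(0, 1)`, so every
Lagrangian `f + ∑ⱼ λⱼ gⱼ(·, x)` is `32`-strongly convex and grows at least like `16 (t - p)²` away
from its minimizer `p`. Adding this growth bound for `p = p(x,λ)` and `p' = p(x,λ')` gives
`32 (p - p')² ≤ ∑ⱼ (λⱼ - λ'ⱼ) (gⱼ(p', x) - gⱼ(p, x)) ≤ ‖λ - λ'‖₁ |p - p'|`, hence
`|p - p'| ≤ ‖λ - λ'‖₁ / 32`; since `gⱼ(·, x)` is `1`-Lipschitz, integrating over `x` concludes.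
-/

open MeasureTheory Set Filter Topology

section StrongConvexity

variable {E : Type*} [NormedAddCommGroup E] [NormedSpace ℝ E] {s t : Set E} {m : ℝ}
  {f g : E → ℝ} {x y : E}

lemma StrongConvexOn.subset (hf : StrongConvexOn s m f) (hts : t ⊆ s) (ht : Convex ℝ t) :
    StrongConvexOn t m f :=
  ⟨ht, fun _ hx _ hy => hf.2 (hts hx) (hts hy)⟩

lemma StrongConvexOn.add_convexOn (hf : StrongConvexOn s m f) (hg : ConvexOn ℝ s g) :
    StrongConvexOn s m (f + g) := by
  simpa [StrongConvexOn] using hf.add (uniformConvexOn_zero.2 hg)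

lemma StrongConvexOn.add_sq_norm_sub_le_of_isMinOn (hf : StrongConvexOn s m f) (hx : x ∈ s)
    (hy : y ∈ s) (hmin : IsMinOn f s x) : f x + m / 2 * ‖x - y‖ ^ 2 ≤ f y := by
  have hchord : ∀ a ∈ Ioo (0 : ℝ) 1, (1 - a) * (m / 2 * ‖x - y‖ ^ 2) ≤ f y - f x := by
    rintro a ⟨ha0, ha1⟩
    have hz := hf.2 hx hy (sub_nonneg.2 ha1.le) ha0.le (sub_add_cancel 1 a)
    have hxz := isMinOn_iff.1 hmin _ (hf.1 hx hy (sub_nonneg.2 ha1.le) ha0.le (sub_add_cancel 1 a))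
    simp only [smul_eq_mul] at hz
    refine le_of_mul_le_mul_left ?_ ha0
    linarith
  have hlim : Tendsto (fun a : ℝ => (1 - a) * (m / 2 * ‖x - y‖ ^ 2)) (𝓝[>] 0)
      (𝓝 (m / 2 * ‖x - y‖ ^ 2)) :=
    tendsto_nhdsWithin_of_tendsto_nhds <| (by fun_prop : Continuous _).tendsto' 0 _ (by simp)
  have := le_of_tendsto hlim (eventually_of_mem (Ioo_mem_nhdsGT one_pos) hchord)
  linarith

lemma StrongConvexOn.mul_norm_sub_le_of_isMinOn (hf : StrongConvexOn s m f)
    (hg : StrongConvexOn s m g) (hx : x ∈ s) (hy : y ∈ s) (hfx : IsMinOn f s x)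
    (hgy : IsMinOn g s y) {L : ℝ} (hL : 0 ≤ L)
    (hfg : f y - f x - (g y - g x) ≤ L * ‖x - y‖) : m * ‖x - y‖ ≤ L := by
  have hf' := hf.add_sq_norm_sub_le_of_isMinOn hx hy hfx
  have hg' := hg.add_sq_norm_sub_le_of_isMinOn hy hx hgy
  rw [norm_sub_rev y x] at hg'
  rcases (norm_nonneg (x - y)).eq_or_lt with h0 | hpos
  · rw [← h0, mul_zero]
    exact hL
  · refine le_of_mul_le_mul_right ?_ hpos
    nlinarith

end StrongConvexity

lemma convexOn_sum {E ι : Type*} [AddCommMonoid E] [Module ℝ E] {s : Set E} (hs : Convex ℝ s)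
    {t : Finset ι} {f : ι → E → ℝ} (hf : ∀ i ∈ t, ConvexOn ℝ s (f i)) :
    ConvexOn ℝ s (fun x => ∑ i ∈ t, f i x) := by
  classical
  induction t using Finset.induction_on with
  | empty => simpa using convexOn_const 0 hs
  | insert i t hi ih =>
    simp only [Finset.sum_insert hi]
    exact (hf i (Finset.mem_insert_self i t)).add
      (ih fun j hj => hf j (Finset.mem_insert_of_mem hj))

lemma abs_integral_sub_integral_le {X : Type*} [MeasurableSpace X] {μ : Measure X}
    [IsProbabilityMeasure μ] {f g : X → ℝ} (hf : Integrable f μ) (hg : Integrable g μ) {C : ℝ}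
    (hfg : ∀ x, |f x - g x| ≤ C) : |∫ x, f x ∂μ - ∫ x, g x ∂μ| ≤ C := by
  rw [← integral_sub hf hg]
  simpa using norm_integral_le_of_norm_le_const (f := fun x => f x - g x) (ae_of_all μ hfg)

lemma le_two_div_pow_three_add_two_div_one_sub_pow_three {t : ℝ} (ht : t ∈ Ioo (0 : ℝ) 1) :
    32 ≤ 2 / t ^ 3 + 2 / (1 - t) ^ 3 := by
  obtain ⟨ht0, ht1⟩ := ht
  have hq : 0 ≤ 16 * (t * (1 - t)) ^ 2 + 4 * (t * (1 - t)) + 4 := by nlinarith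
  -- `t³ + (1 - t)³ - 16 t³ (1 - t)³ = (1 - 2t)² (16 (t (1 - t))² + 4 t (1 - t) + 4) / 4`
  have key : 16 * (t ^ 3 * (1 - t) ^ 3) ≤ t ^ 3 + (1 - t) ^ 3 := by
    nlinarith [mul_nonneg (sq_nonneg (t - 1 / 2)) hq]
  have hs : 0 < 1 - t := by linarith
  rw [div_add_div _ _ (by positivity) (by positivity), le_div_iff₀ (by positivity)]
  linarith

lemma strongConvexOn_one_div_add_one_div_one_sub :
    StrongConvexOn (Ioo (0 : ℝ) 1) 32 (fun t => 1 / t + 1 / (1 - t)) := by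
  rw [strongConvexOn_iff_convex]
  simp only [Real.norm_eq_abs, sq_abs]
  have hf' : ∀ t ∈ Ioo (0 : ℝ) 1, HasDerivAt (fun t => 1 / t + 1 / (1 - t) - 32 / 2 * t ^ 2)
      (-1 / t ^ 2 + 1 / (1 - t) ^ 2 - 32 * t) t := by
    rintro t ⟨ht0, ht1⟩
    have h1 : 1 - t ≠ 0 := by linarith
    refine ((((hasDerivAt_id t).inv ht0.ne').add (((hasDerivAt_const t 1).sub
      (hasDerivAt_id t)).inv h1)).sub ((hasDerivAt_pow 2 t).const_mul (32 / 2))).congr_deriv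
      (by simp; ring) |>.congr_of_eventuallyEq (.of_forall fun x => by simp [one_div])
  have hf'' : ∀ t ∈ Ioo (0 : ℝ) 1, HasDerivAt (fun t => -1 / t ^ 2 + 1 / (1 - t) ^ 2 - 32 * t)
      (2 / t ^ 3 + 2 / (1 - t) ^ 3 - 32) t := by
    rintro t ⟨ht0, ht1⟩
    have h1 : 1 - t ≠ 0 := by linarith
    refine ((((hasDerivAt_pow 2 t).inv (pow_ne_zero 2 ht0.ne')).neg.add
      ((((hasDerivAt_const t 1).sub (hasDerivAt_id t)).pow 2).inv (pow_ne_zero 2 h1))).sub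
      ((hasDerivAt_id t).const_mul 32)).congr_deriv (by simp; field_simp)
      |>.congr_of_eventuallyEq (.of_forall fun x => by simp [neg_div, one_div])
  rw [← interior_Ioo] at hf' hf''
  refine convexOn_of_hasDerivWithinAt2_nonneg (convex_Ioo 0 1)
    (fun t ht => (hf' t (by rwa [interior_Ioo])).continuousAt.continuousWithinAt)
    (fun t ht => (hf' t ht).hasDerivWithinAt) (fun t ht => (hf'' t ht).hasDerivWithinAt) ?_
  rw [interior_Ioo]
  intro t ht
  linarith [le_two_div_pow_three_add_two_div_one_sub_pow_three ht]

noncomputable def lagrangian {ι : Type*} [Fintype ι] (G : ι → ℝ → ℝ) (lam : ι → ℝ) (t : ℝ) : ℝ :=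
  1 / t + 1 / (1 - t) + ∑ i, lam i * G i t

section Lagrangian

variable {ι : Type*} [Fintype ι] {G : ι → ℝ → ℝ} {s : Set ℝ} {lam lam' : ι → ℝ} {a b : ℝ}

lemma strongConvexOn_lagrangian (hs : s ⊆ Ioo 0 1) (hsc : Convex ℝ s)
    (hG : ∀ i, ConvexOn ℝ s (G i)) (hlam : ∀ i, 0 ≤ lam i) :
    StrongConvexOn s 32 (lagrangian G lam) :=
  (strongConvexOn_one_div_add_one_div_one_sub.subset hs hsc).add_convexOn
    (convexOn_sum hsc fun i _ => (hG i).smul (hlam i))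

lemma lagrangian_sub_lagrangian_le (hG : ∀ i, LipschitzOnWith 1 (G i) s) (ha : a ∈ s)
    (hb : b ∈ s) :
    lagrangian G lam b - lagrangian G lam a - (lagrangian G lam' b - lagrangian G lam' a)
      ≤ (∑ i, |lam i - lam' i|) * |a - b| := by
  have hGab : ∀ i, |G i b - G i a| ≤ |a - b| := fun i => by
    rw [abs_sub_comm a b]
    simpa [Real.dist_eq] using (hG i).dist_le_mul b hb a ha
  calc lagrangian G lam b - lagrangian G lam a - (lagrangian G lam' b - lagrangian G lam' a)
      = ∑ i, (lam i - lam' i) * (G i b - G i a) := by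
        simp only [lagrangian, sub_mul, mul_sub, Finset.sum_sub_distrib]
        ring
    _ ≤ ∑ i, |lam i - lam' i| * |a - b| := Finset.sum_le_sum fun i _ =>
        (le_abs_self _).trans ((abs_mul _ _).trans_le
          (mul_le_mul_of_nonneg_left (hGab i) (abs_nonneg _)))
    _ = (∑ i, |lam i - lam' i|) * |a - b| := (Finset.sum_mul ..).symm

lemma abs_sub_le_of_isMinOn_lagrangian (hs : s ⊆ Ioo 0 1) (hsc : Convex ℝ s)
    (hGc : ∀ i, ConvexOn ℝ s (G i)) (hGl : ∀ i, LipschitzOnWith 1 (G i) s)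
    (hlam : ∀ i, 0 ≤ lam i) (hlam' : ∀ i, 0 ≤ lam' i) (ha : a ∈ s) (hb : b ∈ s)
    (hamin : IsMinOn (lagrangian G lam) s a) (hbmin : IsMinOn (lagrangian G lam') s b) :
    |a - b| ≤ 1 / 32 * ∑ i, |lam i - lam' i| := by
  have := (strongConvexOn_lagrangian hs hsc hGc hlam).mul_norm_sub_le_of_isMinOn
    (strongConvexOn_lagrangian hs hsc hGc hlam') ha hb hamin hbmin
    (Finset.sum_nonneg fun i _ => abs_nonneg _) (lagrangian_sub_lagrangian_le hGl ha hb)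
  rw [Real.norm_eq_abs] at this
  linarith

end Lagrangian

theorem constraint_moments_lipschitz_in_duals_general
    {X : Type*} [MeasurableSpace X] (μ : Measure X) [IsProbabilityMeasure μ]
    (γ : ℝ) (hγ0 : 0 < γ) (J : ℕ)
    (g : Fin J → ℝ → X → ℝ)
    (hg_meas : ∀ j, Measurable (Function.uncurry (g j)))
    (hg01 : ∀ j, ∀ t ∈ Set.Icc γ (1 - γ), ∀ x, g j t x ∈ Set.Icc (0 : ℝ) 1)
    (hg_cvx : ∀ j x, ConvexOn ℝ (Set.Icc γ (1 - γ)) (fun t => g j t x))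
    (hg_lip : ∀ j x, LipschitzOnWith 1 (fun t => g j t x) (Set.Icc γ (1 - γ)))
    (p : X → (Fin J → ℝ) → ℝ)
    (hp_meas : ∀ lam : Fin J → ℝ, (∀ j, 0 ≤ lam j) → Measurable (fun x => p x lam))
    (hp_mem : ∀ x, ∀ lam : Fin J → ℝ, (∀ j, 0 ≤ lam j) → p x lam ∈ Set.Icc γ (1 - γ))
    (hp_min : ∀ x, ∀ lam : Fin J → ℝ, (∀ j, 0 ≤ lam j) → ∀ t ∈ Set.Icc γ (1 - γ),
      (1 / p x lam + 1 / (1 - p x lam)) + ∑ j, lam j * g j (p x lam) x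
        ≤ (1 / t + 1 / (1 - t)) + ∑ j, lam j * g j t x)
    (j : Fin J)
    (lam lam' : Fin J → ℝ) (hlam : ∀ j', 0 ≤ lam j') (hlam' : ∀ j', 0 ≤ lam' j') :
    |(∫ x, g j (p x lam) x ∂μ) - ∫ x, g j (p x lam') x ∂μ|
      ≤ (1 / 32) * ∑ j', |lam j' - lam' j'| := by
  have hD : Icc γ (1 - γ) ⊆ Ioo 0 1 := fun t ht => ⟨hγ0.trans_le ht.1, by linarith [ht.2]⟩
  have hint : ∀ l, (∀ j', 0 ≤ l j') → Integrable (fun x => g j (p x l) x) μ := fun l hl =>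
    .of_mem_Icc 0 1 ((hg_meas j).comp ((hp_meas l hl).prodMk measurable_id)).aemeasurable
      (ae_of_all μ fun x => hg01 j _ (hp_mem x l hl) x)
  refine abs_integral_sub_integral_le (hint lam hlam) (hint lam' hlam') fun x => ?_
  have hstable : |p x lam - p x lam'| ≤ 1 / 32 * ∑ j', |lam j' - lam' j'| :=
    abs_sub_le_of_isMinOn_lagrangian hD (convex_Icc _ _) (fun i => hg_cvx i x)
      (fun i => hg_lip i x) hlam hlam' (hp_mem x lam hlam) (hp_mem x lam' hlam')
      (isMinOn_iff.2 (hp_min x lam hlam)) (isMinOn_iff.2 (hp_min x lam' hlam'))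
  refine le_trans ?_ hstable
  simpa [Real.dist_eq] using
    (hg_lip j x).dist_le_mul _ (hp_mem x lam hlam) _ (hp_mem x lam' hlam')

/-- The constraint moment maps `hⱼ(λ) = ∫ gⱼ(p(x,λ), x) dμ(x)` are `(1/32)`-Lipschitz in the
dual variables with respect to the `ℓ¹` norm, where `p(x,λ)` is the unique minimizer of the
pointwise Lagrangian `t ↦ 1/t + 1/(1-t) + ∑ⱼ λⱼ gⱼ(t,x)` over `[γ, 1-γ]`. -/
theorem constraint_moments_lipschitz_in_duals
    {X : Type*} [MeasurableSpace X] (μ : Measure X) [IsProbabilityMeasure μ]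
    (γ : ℝ) (hγ0 : 0 < γ) (hγ : γ < 1 / 2) (J : ℕ)
    (g : Fin J → ℝ → X → ℝ)
    (hg_meas : ∀ j, Measurable (Function.uncurry (g j)))
    (hg01 : ∀ j, ∀ t ∈ Set.Icc γ (1 - γ), ∀ x, g j t x ∈ Set.Icc (0 : ℝ) 1)
    (hg_cvx : ∀ j x, ConvexOn ℝ (Set.Icc γ (1 - γ)) (fun t => g j t x))
    (hg_lip : ∀ j x, LipschitzOnWith 1 (fun t => g j t x) (Set.Icc γ (1 - γ)))
    (p : X → (Fin J → ℝ) → ℝ)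
    (hp_meas : ∀ lam : Fin J → ℝ, (∀ j, 0 ≤ lam j) → Measurable (fun x => p x lam))
    (hp_mem : ∀ x, ∀ lam : Fin J → ℝ, (∀ j, 0 ≤ lam j) → p x lam ∈ Set.Icc γ (1 - γ))
    (hp_min : ∀ x, ∀ lam : Fin J → ℝ, (∀ j, 0 ≤ lam j) → ∀ t ∈ Set.Icc γ (1 - γ),
      (1 / p x lam + 1 / (1 - p x lam)) + ∑ j, lam j * g j (p x lam) x
        ≤ (1 / t + 1 / (1 - t)) + ∑ j, lam j * g j t x)
    (hp_unique : ∀ x, ∀ lam : Fin J → ℝ, (∀ j, 0 ≤ lam j) → ∀ t ∈ Set.Icc γ (1 - γ),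
      (1 / t + 1 / (1 - t)) + ∑ j, lam j * g j t x
        = (1 / p x lam + 1 / (1 - p x lam)) + ∑ j, lam j * g j (p x lam) x → t = p x lam)
    (j : Fin J)
    (lam lam' : Fin J → ℝ) (hlam : ∀ j', 0 ≤ lam j') (hlam' : ∀ j', 0 ≤ lam' j') :
    |(∫ x, g j (p x lam) x ∂μ) - ∫ x, g j (p x lam') x ∂μ|
      ≤ (1 / 32) * ∑ j', |lam j' - lam' j'| :=
  constraint_moments_lipschitz_in_duals_general μ γ hγ0 J g hg_meas hg01 hg_cvx hg_lip p hp_meas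
    hp_mem hp_min j lam lam' hlam hlam'
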